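/- arXiv:2508.07567 — 2 statements merged into one kernel-verified Lean document; each statement's English description precedes it below -/
import Mathlib

section
/- In the extended Arimoto–Blahut iteration, updating the primal variable to the Gibbs distribution does not decrease the surrogate objective: F̃(p_n, q_n) − F̃(p_{n−1}, q_n) = D(p_{n−1} ‖ p_n) + λ_n [∑ p_{n−1}(u,x)(w_{n−2}(u,x) − w_{n−1}(u,x))] ≥ 0, given λ_n ≥ 0, that p_n(u,x) ∝ e^{d[q_n](u,x) − λ_n w_{n−1}(u,x)} with ∑ p_n w_{n−1} = D = ∑ p_{n−1} w_{n−2}, and that w_{n−1} uses the distortion-minimizing estimator for p_{n−1} so that ∑ p_{n−1} w_{n−1} ≤ ∑ p_{n−1} w_{n−2}. -/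
/-!
Write `f = d - λ w_{n-1}`, so that `p_n` is the Gibbs distribution `e^f / Z`. For every probability
vector `p` one has the exact identity `∑ p (f - log p) = log Z - D(p ‖ p_n)`, hence
`∑ p (d - log p) = log Z - D(p ‖ p_n) + λ ∑ p w_{n-1}`. Evaluating it at `p_n` and at `p_{n-1}` and
using `∑ p_n w_{n-1} = D = ∑ p_{n-1} w_{n-2}` gives the stated identity; both of its terms are
nonnegative, by Gibbs' inequality and by optimality of the estimator behind `w_{n-1}`.
-/

open Real Finset

lemma sub_le_mul_log_div {p q : ℝ} (hp : 0 ≤ p) (hq : 0 < q) : p - q ≤ p * log (p / q) := by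
  have hkl : 0 ≤ q * InformationTheory.klFun (p / q) :=
    mul_nonneg hq.le (InformationTheory.klFun_nonneg (div_nonneg hp hq.le))
  rw [InformationTheory.klFun_apply] at hkl
  have hexpand : q * (p / q * log (p / q) + 1 - p / q) = p * log (p / q) + q - p := by
    rw [mul_sub, mul_add, ← mul_assoc, mul_div_cancel₀ p hq.ne']
    ring
  linarith

lemma sum_sub_sum_le_sum_mul_log_div {ι : Type*} (s : Finset ι) {p q : ι → ℝ}
    (hp : ∀ i ∈ s, 0 ≤ p i) (hq : ∀ i ∈ s, 0 < q i) :
    ∑ i ∈ s, p i - ∑ i ∈ s, q i ≤ ∑ i ∈ s, p i * log (p i / q i) := by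
  rw [← sum_sub_distrib]
  exact sum_le_sum fun i hi => sub_le_mul_log_div (hp i hi) (hq i hi)

section Gibbs

variable {ι : Type*} [Fintype ι]

noncomputable def gibbs (f : ι → ℝ) (i : ι) : ℝ := exp (f i) / ∑ j, exp (f j)

variable [Nonempty ι] (f : ι → ℝ)

lemma sum_exp_pos : 0 < ∑ j, exp (f j) :=
  sum_pos (fun j _ => exp_pos (f j)) univ_nonempty

lemma gibbs_pos (i : ι) : 0 < gibbs f i :=
  div_pos (exp_pos (f i)) (sum_exp_pos f)

lemma sum_gibbs : ∑ i, gibbs f i = 1 := by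
  simp only [gibbs, ← sum_div]
  exact div_self (sum_exp_pos f).ne'

lemma log_gibbs (i : ι) : log (gibbs f i) = f i - log (∑ j, exp (f j)) := by
  rw [gibbs, log_div (exp_ne_zero _) (sum_exp_pos f).ne', log_exp]

lemma sum_mul_sub_log_eq_log_sum_exp_sub {p : ι → ℝ} (hp0 : ∀ i, 0 ≤ p i) (hp1 : ∑ i, p i = 1) :
    ∑ i, p i * (f i - log (p i))
      = log (∑ j, exp (f j)) - ∑ i, p i * log (p i / gibbs f i) := by
  have hterm : ∀ i, p i * (f i - log (p i))
      = p i * log (∑ j, exp (f j)) - p i * log (p i / gibbs f i) := by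
    intro i
    rcases (hp0 i).eq_or_lt with hzero | hpos
    · simp [← hzero]
    · rw [log_div hpos.ne' (gibbs_pos f i).ne', log_gibbs]
      ring
  rw [sum_congr rfl fun i _ => hterm i, sum_sub_distrib, ← sum_mul, hp1, one_mul]

lemma sum_mul_sub_log_eq_of_tilt (d w : ι → ℝ) (lam : ℝ) {p : ι → ℝ}
    (hp0 : ∀ i, 0 ≤ p i) (hp1 : ∑ i, p i = 1) :
    ∑ i, p i * (d i - log (p i))
      = log (∑ j, exp (d j - lam * w j))
        - ∑ i, p i * log (p i / gibbs (fun j => d j - lam * w j) i) + lam * ∑ i, p i * w i := by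
  rw [← sum_mul_sub_log_eq_log_sum_exp_sub (fun j => d j - lam * w j) hp0 hp1, mul_sum,
    ← sum_add_distrib]
  exact sum_congr rfl fun i _ => by ring

end Gibbs

/-- the primal (Gibbs) update of the extended Arimoto–Blahut algorithm
does not decrease the surrogate objective `Φ(p) = ∑ p (d - log p)`:
`Φ(p_n) - Φ(p_{n-1}) = D(p_{n-1} ‖ p_n) + λ_n ∑ p_{n-1} (w_{n-2} - w_{n-1}) ≥ 0`,
given `λ_n ≥ 0`, `p_n ∝ exp (d - λ_n w_{n-1})` with `∑ p_n w_{n-1} = D = ∑ p_{n-1} w_{n-2}`,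
and `∑ p_{n-1} w_{n-1} ≤ ∑ p_{n-1} w_{n-2}` (optimality of the estimator behind `w_{n-1}`). -/
theorem primal_gibbs_update_improves
    {ι : Type*} [Fintype ι] [Nonempty ι]
    (d wprev wcur : ι → ℝ) (D lam : ℝ) (hlam : 0 ≤ lam)
    (pprev pn : ι → ℝ)
    (hpprev0 : ∀ i, 0 ≤ pprev i) (hpprev1 : ∑ i, pprev i = 1)
    (hpn : pn = fun i => Real.exp (d i - lam * wcur i) / ∑ j, Real.exp (d j - lam * wcur j))
    (hfeas_n : ∑ i, pn i * wcur i = D)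
    (hfeas_prev : ∑ i, pprev i * wprev i = D)
    (hopt : ∑ i, pprev i * wcur i ≤ ∑ i, pprev i * wprev i) :
    (∑ i, pn i * (d i - Real.log (pn i))) - (∑ i, pprev i * (d i - Real.log (pprev i)))
      = (∑ i, pprev i * Real.log (pprev i / pn i))
        + lam * ∑ i, pprev i * (wprev i - wcur i) ∧
    0 ≤ (∑ i, pn i * (d i - Real.log (pn i)))
        - (∑ i, pprev i * (d i - Real.log (pprev i))) := by
  set f : ι → ℝ := fun j => d j - lam * wcur j
  have hgibbs : pn = gibbs f := hpn
  have hpn_pos : ∀ i, 0 < pn i := hgibbs ▸ gibbs_pos f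
  have hpn1 : ∑ i, pn i = 1 := hgibbs ▸ sum_gibbs f
  have hself : ∑ i, pn i * log (pn i / pn i) = 0 := by
    simp [div_self (hpn_pos _).ne']
  have hval_n := sum_mul_sub_log_eq_of_tilt d wcur lam (fun i => (hpn_pos i).le) hpn1
  have hval_prev := sum_mul_sub_log_eq_of_tilt d wcur lam hpprev0 hpprev1
  rw [← hgibbs, hself, hfeas_n] at hval_n
  rw [← hgibbs] at hval_prev
  have hsplit : ∑ i, pprev i * (wprev i - wcur i) = D - ∑ i, pprev i * wcur i := by
    simp only [mul_sub, sum_sub_distrib, hfeas_prev]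
  have hident : (∑ i, pn i * (d i - log (pn i))) - (∑ i, pprev i * (d i - log (pprev i)))
      = (∑ i, pprev i * log (pprev i / pn i)) + lam * ∑ i, pprev i * (wprev i - wcur i) := by
    rw [hval_n, hval_prev, hsplit]
    ring
  have hkl := sum_sub_sum_le_sum_mul_log_div univ (fun i _ => hpprev0 i) (fun i _ => hpn_pos i)
  rw [hpprev1, hpn1, sub_self] at hkl
  have hdescent : 0 ≤ lam * ∑ i, pprev i * (wprev i - wcur i) :=
    mul_nonneg hlam (by rw [hsplit]; linarith)
  exact ⟨hident, by rw [hident]; linarith⟩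
end

section
/- Let d, w : I → ℝ on a finite set I and suppose λ* solves ∑_i w(i) e^{d(i) − λ w(i)} = D ∑_i e^{d(i) − λ w(i)}, i.e., the Gibbs distribution p_λ*(i) ∝ e^{d(i) − λ* w(i)} satisfies E_{p_λ*}[w] = D. If additionally min_i w(i) < D < max_i w(i), then such a λ* exists. -/
/-!
Shift the weights to `c = w - D`; the claim becomes a zero of
`g λ = ∑ c i * exp (d i - λ c i)`, which differs from `∑ (w - D) e^{d - λ w}` by the factor
`e^{λ D}`. The minimiser of `w` gives a term `c i < 0` that drives `g` to `-∞` as `λ → ∞`,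
while every other term stays below `max 0 (c i e^{d i})` for `λ ≥ 0`; symmetrically the
maximiser drives `g` to `+∞` as `λ → -∞`. A continuous function with these limits is onto.
-/

open Filter Real

theorem mul_exp_sub_mul_le_max (c d : ℝ) {a : ℝ} (ha : 0 ≤ a) :
    c * exp (d - a * c) ≤ max 0 (c * exp d) := by
  rcases le_or_gt c 0 with hc | hc
  · exact (mul_nonpos_of_nonpos_of_nonneg hc (exp_pos _).le).trans (le_max_left _ _)
  · have : exp (d - a * c) ≤ exp d := exp_le_exp.2 (by nlinarith)
    exact (mul_le_mul_of_nonneg_left this hc.le).trans (le_max_right _ _)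

theorem tendsto_mul_exp_sub_mul_atBot {c : ℝ} (d : ℝ) (hc : c < 0) :
    Tendsto (fun a : ℝ => c * exp (d - a * c)) atTop atBot := by
  have harg : Tendsto (fun a : ℝ => d - a * c) atTop atTop := by
    simpa [sub_eq_add_neg, ← mul_neg] using
      tendsto_atTop_add_const_left atTop d (tendsto_id.atTop_mul_const (neg_pos.2 hc))
  exact (tendsto_exp_atTop.comp harg).const_mul_atTop_of_neg hc

theorem tendsto_sum_mul_exp_sub_mul_atTop_atBot {ι : Type*} [Fintype ι] (c d : ι → ℝ) {i₀ : ι}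
    (h₀ : c i₀ < 0) :
    Tendsto (fun a : ℝ => ∑ i, c i * exp (d i - a * c i)) atTop atBot := by
  classical
  simp_rw [← Finset.add_sum_erase _ _ (Finset.mem_univ i₀)]
  refine tendsto_atBot_add_right_of_ge' _ (∑ i ∈ Finset.univ.erase i₀, max 0 (c i * exp (d i)))
    (tendsto_mul_exp_sub_mul_atBot (d i₀) h₀) ?_
  filter_upwards [eventually_ge_atTop 0] with a ha
  exact Finset.sum_le_sum fun i _ => mul_exp_sub_mul_le_max (c i) (d i) ha

theorem tendsto_sum_mul_exp_sub_mul_atBot_atTop {ι : Type*} [Fintype ι] (c d : ι → ℝ) {i₁ : ι}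
    (h₁ : 0 < c i₁) :
    Tendsto (fun a : ℝ => ∑ i, c i * exp (d i - a * c i)) atBot atTop := by
  have h := tendsto_sum_mul_exp_sub_mul_atTop_atBot (fun i => -c i) d (neg_lt_zero.2 h₁)
  convert tendsto_neg_atBot_atTop.comp (h.comp tendsto_neg_atBot_atTop) using 2 with a
  simp [Finset.sum_neg_distrib, sub_eq_add_neg]

theorem exists_sum_mul_exp_sub_mul_eq_zero {ι : Type*} [Fintype ι] (c d : ι → ℝ) {i₀ i₁ : ι}
    (h₀ : c i₀ < 0) (h₁ : 0 < c i₁) :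
    ∃ a : ℝ, ∑ i, c i * exp (d i - a * c i) = 0 :=
  (Continuous.surjective' (by fun_prop) (tendsto_sum_mul_exp_sub_mul_atBot_atTop c d h₁)
    (tendsto_sum_mul_exp_sub_mul_atTop_atBot c d h₀)) 0

theorem sum_sub_mul_exp_shift {ι : Type*} [Fintype ι] (d w : ι → ℝ) (D a : ℝ) :
    ∑ i, (w i - D) * exp (d i - a * (w i - D))
      = exp (a * D) * (∑ i, w i * exp (d i - a * w i) - D * ∑ i, exp (d i - a * w i)) := by
  rw [Finset.mul_sum, ← Finset.sum_sub_distrib, Finset.mul_sum]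
  refine Finset.sum_congr rfl fun i _ => ?_
  rw [show d i - a * (w i - D) = a * D + (d i - a * w i) by ring, exp_add]
  ring

/-- if `min w < D < max w` then there exists `λ*` such that the Gibbs
distribution `p_{λ*} ∝ exp (d - λ* w)` satisfies `E_{p_{λ*}}[w] = D`, i.e.
`∑ w e^{d - λ* w} = D ∑ e^{d - λ* w}`. -/
theorem gibbs_lambda_exists
    {ι : Type*} [Fintype ι] [Nonempty ι] (d w : ι → ℝ) (D : ℝ)
    (hmin : Finset.univ.inf' Finset.univ_nonempty w < D)
    (hmax : D < Finset.univ.sup' Finset.univ_nonempty w) :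
    ∃ lam : ℝ, ∑ i, w i * Real.exp (d i - lam * w i)
      = D * ∑ i, Real.exp (d i - lam * w i) := by
  obtain ⟨i₀, -, h₀⟩ := (Finset.inf'_lt_iff _).1 hmin
  obtain ⟨i₁, -, h₁⟩ := (Finset.lt_sup'_iff _).1 hmax
  obtain ⟨lam, hlam⟩ := exists_sum_mul_exp_sub_mul_eq_zero (fun i => w i - D) d
    (sub_neg.2 h₀) (sub_pos.2 h₁)
  rw [sum_sub_mul_exp_shift, mul_eq_zero] at hlam
  exact ⟨lam, sub_eq_zero.1 (hlam.resolve_left (exp_pos _).ne')⟩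
end
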